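/- arXiv:1704.05595 — 2 statements merged into one kernel-verified Lean document; each statement's English description precedes it below -/
import Mathlib

section
/- For every real number α ≥ 0 and all integers s ≥ 1 and x ≥ 1, S_{4,s,x}^{(α)} = ∑_{r=0}^{s} ∑_{p=0}^{s} ∑_{m=0}^{s} ∑_{k=1}^{x−r} ( C(x−k, r) · B_{s−r,p+1}(m+α; k) − (r+1) · C(x+1−k, r+1) · B_{s−r,p+1}(m+α−1; k) ) · C_{4,s}(r,p,m), where S_{4,s,x}^{(α)} is the coefficient of q^x in ∑_{i=1}^{x} i^{α−1} · Σ_{4,s}(q,i). -/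
open PowerSeries Finset

/-- Generalized sum-of-divisors function `σ_α(n) = ∑_{d ∣ n} d^α` (real powers). -/
noncomputable def sigma' (α : ℝ) (n : ℕ) : ℝ := ∑ d ∈ n.divisors, (d : ℝ) ^ α

/-- Bounded-divisor sum `σ_{α,m}(n) = ∑_{d ∣ n, d ≤ ⌊n/m⌋} d^α`. -/
noncomputable def sigmaB (α : ℝ) (m n : ℕ) : ℝ :=
  ∑ d ∈ n.divisors.filter (fun d => d ≤ n / m), (d : ℝ) ^ α

/-- Binomial-convolution divisor sum
`B_{k,m}(β; n) = ∑_{d ∣ n, d ≤ ⌊n/m⌋} C(n/d - m + k, k) d^β`. -/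
noncomputable def Bfun (k m : ℕ) (β : ℝ) (n : ℕ) : ℝ :=
  ∑ d ∈ n.divisors.filter (fun d => d ≤ n / m),
    ((n / d - m + k).choose k : ℝ) * (d : ℝ) ^ β

/-- Unsigned Stirling numbers of the first kind. -/
def stirling1 : ℕ → ℕ → ℕ
  | 0, 0 => 1
  | 0, _ + 1 => 0
  | _ + 1, 0 => 0
  | s + 1, m + 1 => s * stirling1 s (m + 1) + stirling1 s m

/-- Stirling numbers of the second kind. -/
def stirling2 : ℕ → ℕ → ℕ
  | 0, 0 => 1
  | 0, _ + 1 => 0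
  | _ + 1, 0 => 0
  | m + 1, k + 1 => (k + 1) * stirling2 m (k + 1) + stirling2 m k

/-- Binomial coefficient `C(z, j) = z(z-1)⋯(z-j+1)/j!` with integer top argument. -/
noncomputable def zchoose (z : ℤ) (j : ℕ) : ℝ :=
  (∏ i ∈ Finset.range j, ((z : ℝ) - (i : ℝ))) / (j.factorial : ℝ)

/-- Binomial coefficient `C(a, b)` with natural top and integer bottom argument,
zero when `b < 0`. -/
noncomputable def nchooseZ (a : ℕ) (b : ℤ) : ℝ :=
  if 0 ≤ b then (a.choose b.toNat : ℝ) else 0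

/-- The coefficients `C_{4,s}(r,p,m)`. -/
noncomputable def C4 (s r p m : ℕ) : ℝ :=
  ∑ k ∈ Finset.range (m + 1),
    (s.choose r : ℝ) * (stirling1 (s - r) m : ℝ) * (stirling2 m k : ℝ) *
      zchoose ((s : ℤ) - r - k) p * (-1 : ℝ) ^ ((s : ℤ) - r - k + p) *
      (k.factorial : ℝ) * (r.factorial : ℝ)

/-- The coefficients `C_{8,s}(r,p,n,w)`. -/
noncomputable def C8 (s r p n w : ℕ) : ℝ :=
  ∑ m ∈ Finset.range (s - r + 1), ∑ k ∈ Finset.range (m + 1),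
    ∑ m1 ∈ Finset.range (r + 1 - n + 1), ∑ m2 ∈ Finset.range (n + 1),
      (s.choose r : ℝ) * (stirling1 (s - r) m : ℝ) * (stirling2 m k : ℝ) *
        zchoose ((s : ℤ) - r - k) p * (stirling1 (r + 1 - n) m1 : ℝ) *
        (stirling1 n m2 : ℝ) * nchooseZ m2 ((w : ℤ) - m - m1) *
        (-1 : ℝ) ^ (s - k + p + n + m1 + m2) * (k.factorial : ℝ) *
        (((n : ℤ) - 2 - r : ℤ) : ℝ) ^ ((m : ℤ) + m1 + m2 - w)

/-- The component power series `Σ_{4,s}(q,i)` (formal power series over `ℝ`). -/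
noncomputable def Sigma4 (s i : ℕ) : PowerSeries ℝ :=
  ∑ r ∈ Finset.range (s + 1), ∑ p ∈ Finset.range (s + 1), ∑ m ∈ Finset.range (s + 1),
    PowerSeries.C (C4 s r p m) * X ^ ((p + 1) * i + r) * ((1 - X ^ i)⁻¹) ^ (s - r + 1) *
      (PowerSeries.C ((i : ℝ) ^ (m + 1)) * ((1 - X)⁻¹) ^ (r + 1) -
        PowerSeries.C (((r : ℝ) + 1) * (i : ℝ) ^ m) * ((1 - X)⁻¹) ^ (r + 2))

/-- The component power series `Σ_{8,s}(q,i)` (formal power series over `ℝ`). -/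
noncomputable def Sigma8 (s i : ℕ) : PowerSeries ℝ :=
  ∑ r ∈ Finset.range (s + 1), ∑ p ∈ Finset.range (s + 1),
    ∑ n ∈ Finset.range (r + 2), ∑ w ∈ Finset.range (s + 1),
      PowerSeries.C (C8 s r p n w * (i : ℝ) ^ w) * X ^ ((p + 2) * i + n - 1) *
        ((1 - X ^ i)⁻¹) ^ (s - r + 1) *
        (PowerSeries.C (r.choose n : ℝ) * ((1 - X)⁻¹) ^ (r + 1) -
          PowerSeries.C ((r + 1).choose n : ℝ) * ((1 - X)⁻¹) ^ (r + 2))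

/-- `S_{4,s,x}^{(α)}`: the coefficient of `q^x` in `∑_{i=1}^{max(x,1)} i^{α-1} Σ_{4,s}(q,i)`. -/
noncomputable def S4c (α : ℝ) (s x : ℕ) : ℝ :=
  PowerSeries.coeff x
    (∑ i ∈ Finset.Icc 1 (max x 1), PowerSeries.C ((i : ℝ) ^ (α - 1)) * Sigma4 s i)

/-- `S_{8,s,x}^{(α)}`: the coefficient of `q^x` in `∑_{i=1}^{x+1} i^{α-1} Σ_{8,s}(q,i)`. -/
noncomputable def S8c (α : ℝ) (s x : ℕ) : ℝ :=
  PowerSeries.coeff x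
    (∑ i ∈ Finset.Icc 1 (x + 1), PowerSeries.C ((i : ℝ) ^ (α - 1)) * Sigma8 s i)

/-! Since `(1 - q^i)^{-(t+1)} = ∑_a C(a + t, t) q^{ia}` and
`q^r (1 - q)^{-(r+1)} = ∑_n C(n, r) q^n`, the coefficient of `q^x` in a summand of `Σ_{4,s}(q,i)`
is a convolution over `k + (x - k) = x` whose first factor vanishes unless `i ∣ k` and
`(p + 1) i ≤ k`. Exchanging the sums over `i` and `k`, the sum over `i` becomes a sum over the
divisors `d ≤ ⌊k/(p+1)⌋` of `k`, that is, `B_{s-r,p+1}`. -/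

def divisorChoose (t e i k : ℕ) : ℕ :=
  if i ∣ k ∧ e ≤ k / i then (k / i - e + t).choose t else 0

namespace PowerSeries

variable {K : Type*} [Field K]

theorem inv_one_sub_X_pow_succ (t : ℕ) :
    ((1 - X : K⟦X⟧)⁻¹) ^ (t + 1) = mk fun n => ((t + n).choose t : K) := by
  have h : (1 - X : K⟦X⟧)⁻¹ = mk 1 :=
    (inv_eq_iff_mul_eq_one (by simp)).2 (mk_one_mul_one_sub_eq_one K)
  rw [h, mk_one_pow_eq_mk_choose_add]

theorem expand_inv_one_sub_X {i : ℕ} (hi : i ≠ 0) :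
    expand i hi (1 - X : K⟦X⟧)⁻¹ = (1 - X ^ i)⁻¹ := by
  have h : (1 - X ^ i : K⟦X⟧) = expand i hi (1 - X) := by simp
  rw [eq_comm, inv_eq_iff_mul_eq_one (by simp [zero_pow hi]), h, ← map_mul,
    PowerSeries.inv_mul_cancel _ (by simp), map_one]

theorem coeff_X_pow_mul_expand {i : ℕ} (hi : i ≠ 0) (e n : ℕ) (φ : K⟦X⟧) :
    coeff n (X ^ (e * i) * expand i hi φ) =
      if i ∣ n ∧ e ≤ n / i then coeff (n / i - e) φ else 0 := by
  rw [show (X : K⟦X⟧) ^ (e * i) = expand i hi (X ^ e) by simp [← pow_mul, mul_comm],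
    ← map_mul, coeff_expand]
  by_cases hd : i ∣ n
  · simp [hd, coeff_X_pow_mul']
  · simp [hd]

theorem coeff_X_pow_mul_inv_one_sub_X_pow_pow {i : ℕ} (hi : i ≠ 0) (e t n : ℕ) :
    coeff n (X ^ (e * i) * ((1 - X ^ i : K⟦X⟧)⁻¹) ^ (t + 1)) =
      (divisorChoose t e i n : K) := by
  rw [← expand_inv_one_sub_X hi, ← map_pow, inv_one_sub_X_pow_succ, coeff_X_pow_mul_expand,
    coeff_mk, divisorChoose, add_comm t]
  split_ifs <;> simp

theorem coeff_X_pow_mul_inv_one_sub_X_pow_self (r n : ℕ) :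
    coeff n (X ^ r * ((1 - X : K⟦X⟧)⁻¹) ^ (r + 1)) = (n.choose r : K) := by
  rw [inv_one_sub_X_pow_succ, coeff_X_pow_mul', coeff_mk]
  split_ifs with h
  · rw [Nat.add_sub_cancel' h]
  · rw [Nat.choose_eq_zero_of_lt (not_le.1 h), Nat.cast_zero]

theorem coeff_X_pow_mul_inv_one_sub_X_pow_succ_self (r n : ℕ) :
    coeff n (X ^ r * ((1 - X : K⟦X⟧)⁻¹) ^ (r + 2)) = ((n + 1).choose (r + 1) : K) := by
  rw [inv_one_sub_X_pow_succ, coeff_X_pow_mul', coeff_mk]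
  split_ifs with h
  · congr 2; omega
  · rw [Nat.choose_eq_zero_of_lt (by omega), Nat.cast_zero]

end PowerSeries

theorem coeff_Sigma4_summand {K : Type*} [Field K] {i : ℕ} (hi : i ≠ 0) (c a b : K)
    (e t r x : ℕ) :
    coeff x (C c * X ^ (e * i + r) * ((1 - X ^ i)⁻¹) ^ (t + 1) *
        (C a * ((1 - X)⁻¹) ^ (r + 1) - C b * ((1 - X)⁻¹) ^ (r + 2))) =
      c * ∑ k ∈ range (x + 1), (divisorChoose t e i k : K) *
        (a * (x - k).choose r - b * (x - k + 1).choose (r + 1)) := by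
  have h : C c * X ^ (e * i + r) * ((1 - X ^ i)⁻¹) ^ (t + 1) *
        (C a * ((1 - X)⁻¹) ^ (r + 1) - C b * ((1 - X)⁻¹) ^ (r + 2)) =
      C c * ((X ^ (e * i) * ((1 - X ^ i)⁻¹) ^ (t + 1)) *
        (C a * (X ^ r * ((1 - X)⁻¹) ^ (r + 1)) - C b * (X ^ r * ((1 - X)⁻¹) ^ (r + 2)))) := by
    ring
  rw [h, coeff_C_mul, coeff_mul, Nat.sum_antidiagonal_eq_sum_range_succ_mk]
  simp only [map_sub, coeff_C_mul, coeff_X_pow_mul_inv_one_sub_X_pow_pow hi,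
    coeff_X_pow_mul_inv_one_sub_X_pow_self, coeff_X_pow_mul_inv_one_sub_X_pow_succ_self]

theorem zchoose_natCast (n j : ℕ) : zchoose n j = n.choose j := by
  rw [zchoose, Nat.cast_choose_eq_descPochhammer_div, descPochhammer_eval_eq_prod_range,
    Int.cast_natCast]

theorem Bfun_zero (t e : ℕ) (β : ℝ) : Bfun t e β 0 = 0 := by
  simp [Bfun]

theorem Bfun_eq_sum_divisorChoose {t e k N : ℕ} (he : 0 < e) (hk : k ≤ N) (β : ℝ) :
    Bfun t e β k = ∑ i ∈ Icc 1 N, (divisorChoose t e i k : ℝ) * (i : ℝ) ^ β := by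
  simp only [divisorChoose, Nat.cast_ite, Nat.cast_zero, ite_mul, zero_mul, ← sum_filter, Bfun]
  refine sum_congr (ext fun d => ?_) fun _ _ => rfl
  simp only [mem_filter, Nat.mem_divisors, mem_Icc]
  constructor
  · rintro ⟨⟨hdk, hk0⟩, hde⟩
    have hd : 0 < d := Nat.pos_of_dvd_of_pos hdk (Nat.pos_of_ne_zero hk0)
    have := Nat.le_of_dvd (Nat.pos_of_ne_zero hk0) hdk
    refine ⟨⟨hd, by omega⟩, hdk, (Nat.le_div_iff_mul_le hd).2 ?_⟩
    rw [mul_comm]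
    exact (Nat.le_div_iff_mul_le he).1 hde
  · rintro ⟨⟨hd, -⟩, hdk, hed⟩
    have hed' := (Nat.le_div_iff_mul_le hd).1 hed
    refine ⟨⟨hdk, by nlinarith⟩, (Nat.le_div_iff_mul_le he).2 (by rwa [mul_comm])⟩

theorem sum_rpow_mul_divisorChoose {t e k N : ℕ} (he : 0 < e) (hk : k ≤ N) (α : ℝ) (m : ℕ)
    (a b c : ℝ) :
    ∑ i ∈ Icc 1 N, (i : ℝ) ^ (α - 1) *
        (divisorChoose t e i k * ((i : ℝ) ^ (m + 1) * a - c * (i : ℝ) ^ m * b)) =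
      a * Bfun t e (m + α) k - c * b * Bfun t e (m + α - 1) k := by
  rw [Bfun_eq_sum_divisorChoose he hk, Bfun_eq_sum_divisorChoose he hk, mul_sum, mul_sum,
    ← sum_sub_distrib]
  refine sum_congr rfl fun i hi => ?_
  have hi : (i : ℝ) ≠ 0 := by have := (mem_Icc.1 hi).1; positivity
  have h₁ : (i : ℝ) ^ ((m : ℝ) + α) = (i : ℝ) ^ (α - 1) * (i : ℝ) ^ (m + 1) := by
    rw [← Real.rpow_add_natCast hi]; push_cast; ring_nf
  have h₂ : (i : ℝ) ^ ((m : ℝ) + α - 1) = (i : ℝ) ^ (α - 1) * (i : ℝ) ^ m := by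
    rw [← Real.rpow_add_natCast hi]; ring_nf
  rw [h₁, h₂]
  ring

theorem sum_range_choose_mul_Bfun (x r t e : ℕ) (β β' c : ℝ) :
    ∑ k ∈ range (x + 1),
        ((x - k).choose r * Bfun t e β k - c * (x - k + 1).choose (r + 1) * Bfun t e β' k) =
      ∑ k ∈ Icc 1 (x - r),
        (zchoose ((x : ℤ) - k) r * Bfun t e β k -
          c * zchoose ((x : ℤ) + 1 - k) (r + 1) * Bfun t e β' k) := by
  have hsub : Icc 1 (x - r) ⊆ range (x + 1) := fun k hk => by
    simp only [mem_Icc, mem_range] at hk ⊢; omega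
  rw [← sum_subset hsub]
  · refine sum_congr rfl fun k hk => ?_
    have hkx : k ≤ x := by have := (mem_Icc.1 hk).2; omega
    rw [show (x : ℤ) - k = ((x - k : ℕ) : ℤ) by omega,
      show (x : ℤ) + 1 - k = ((x - k + 1 : ℕ) : ℤ) by omega, zchoose_natCast, zchoose_natCast]
  · intro k hk hk'
    simp only [mem_Icc, mem_range, not_and_or, not_le] at hk hk'
    rcases hk' with hk0 | hkr
    · rw [Nat.lt_one_iff.1 hk0, Bfun_zero, Bfun_zero]; ring
    · rw [Nat.choose_eq_zero_of_lt (by omega : x - k < r),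
        Nat.choose_eq_zero_of_lt (by omega : x - k + 1 < r + 1)]; ring

theorem coeff_C_mul_Sigma4 {i : ℕ} (hi : i ≠ 0) (w : ℝ) (s x : ℕ) :
    coeff x (C w * Sigma4 s i) =
      ∑ r ∈ range (s + 1), ∑ p ∈ range (s + 1), ∑ m ∈ range (s + 1),
        ∑ k ∈ range (x + 1), w * (divisorChoose (s - r) (p + 1) i k *
          ((i : ℝ) ^ (m + 1) * (x - k).choose r -
            (r + 1) * (i : ℝ) ^ m * (x - k + 1).choose (r + 1))) * C4 s r p m := by
  simp only [Sigma4, mul_sum, map_sum, coeff_C_mul, coeff_Sigma4_summand hi]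
  ac_rfl

theorem S4_eq_binomial_divisor_sums_general (α : ℝ) (s x : ℕ) :
    S4c α s x =
      ∑ r ∈ Finset.range (s + 1), ∑ p ∈ Finset.range (s + 1),
        ∑ m ∈ Finset.range (s + 1), ∑ k ∈ Finset.Icc 1 (x - r),
          (zchoose ((x : ℤ) - k) r * Bfun (s - r) (p + 1) ((m : ℝ) + α) k -
            ((r : ℝ) + 1) * zchoose ((x : ℤ) + 1 - k) (r + 1) *
              Bfun (s - r) (p + 1) ((m : ℝ) + α - 1) k) * C4 s r p m := by
  rw [S4c, map_sum, sum_congr rfl fun i hi =>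
    coeff_C_mul_Sigma4 (Nat.one_le_iff_ne_zero.1 (mem_Icc.1 hi).1) _ s x]
  rw [sum_comm]; refine sum_congr rfl fun r _ => ?_
  rw [sum_comm]; refine sum_congr rfl fun p _ => ?_
  rw [sum_comm]; refine sum_congr rfl fun m _ => ?_
  rw [sum_comm]
  simp only [← sum_mul]
  rw [← sum_range_choose_mul_Bfun]
  congr 1
  exact sum_congr rfl fun k hk =>
    sum_rpow_mul_divisorChoose p.succ_pos (by have := mem_range.1 hk; omega) α m _ _ _

/-- Corollary, part (i): relation of `S_{4,s,x}^{(α)}` to the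
binomial divisor sums `B_{k,m}(β; n)`. -/
theorem S4_eq_binomial_divisor_sums (α : ℝ) (hα : 0 ≤ α) (s x : ℕ)
    (hs : 1 ≤ s) (hx : 1 ≤ x) :
    S4c α s x =
      ∑ r ∈ Finset.range (s + 1), ∑ p ∈ Finset.range (s + 1),
        ∑ m ∈ Finset.range (s + 1), ∑ k ∈ Finset.Icc 1 (x - r),
          (zchoose ((x : ℤ) - k) r * Bfun (s - r) (p + 1) ((m : ℝ) + α) k -
            ((r : ℝ) + 1) * zchoose ((x : ℤ) + 1 - k) (r + 1) *
              Bfun (s - r) (p + 1) ((m : ℝ) + α - 1) k) * C4 s r p m :=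
  S4_eq_binomial_divisor_sums_general α s x
end

section
/- For every integer x ≥ 1, the divisor function d(x) = σ_0(x) satisfies C(x,2) · d(x) = ∑_{k=1}^{x−1} τ_{2,x}^{(0)}(k) + ρ_2^{(0)}(x), where τ_{2,x}^{(0)}(k) := (1/4) · ( (3k−2)·σ_0(k) − (k−1)·σ_1(k) − σ_2(k) ) + (1/4) · ( k²·σ_{−2,3}(k) + k(k−3)·σ_{−1,3}(k) − (3k−2)·σ_{0,3}(k) + 2·σ_{1,3}(k) ) and ρ_2^{(0)}(x) := (1/4) · ( (−2+x+2x²)·σ_0(x) − (x−1)·σ_1(x) − σ_2(x) ) + (1/4) · ( x²·σ_{−2,3}(x) + x(x−3)·σ_{−1,3}(x) − (3x−2)·σ_{0,3}(x) + 2·σ_{1,3}(x) ). -/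
open Finset

set_option linter.unusedVariables false

/-- `τ_{2,x}^{(0)}(k)`. -/
noncomputable def tau20 (x k : ℕ) : ℝ :=
  (1 / 4) * ((3 * (k : ℝ) - 2) * sigma' 0 k - ((k : ℝ) - 1) * sigma' 1 k - sigma' 2 k) +
  (1 / 4) * ((k : ℝ) ^ 2 * sigmaB (-2) 3 k + (k : ℝ) * ((k : ℝ) - 3) * sigmaB (-1) 3 k -
    (3 * (k : ℝ) - 2) * sigmaB 0 3 k + 2 * sigmaB 1 3 k)

/-- `ρ_{2}^{(0)}(x)`. -/
noncomputable def rho20 (x : ℕ) : ℝ :=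
  (1 / 4) * ((-2 + (x : ℝ) + 2 * (x : ℝ) ^ 2) * sigma' 0 x - ((x : ℝ) - 1) * sigma' 1 x -
    sigma' 2 x) +
  (1 / 4) * ((x : ℝ) ^ 2 * sigmaB (-2) 3 x + (x : ℝ) * ((x : ℝ) - 3) * sigmaB (-1) 3 x -
    (3 * (x : ℝ) - 2) * sigmaB 0 3 x + 2 * sigmaB 1 3 x)

/-!
Every `τ_{2,x}^{(0)}(k)` vanishes, and `ρ_2^{(0)}(x) = τ_{2,x}^{(0)}(x) + C(x,2) d(x)`.
To see `τ(k) = 0`, reindex the bounded sums over `d ≤ k/3` by the complementary divisor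
`e = k/d ≥ 3`: the bounded bracket becomes `∑_{e ∣ k, e ≥ 3} (e-1)(e-2)(e+k)/e`, and the
condition `e ≥ 3` can be dropped because the summand vanishes at `e = 1, 2`. Adding the
unbounded bracket leaves `2 ∑_{e ∣ k} (k/e - e)`, which is `0` since `e ↦ k/e` permutes the
divisors of `k`.
-/

theorem Nat.sum_divisors_filter_le_div {M : Type*} [AddCommMonoid M] {m : ℕ} (hm : 0 < m)
    (k : ℕ) (f : ℕ → M) :
    ∑ d ∈ k.divisors.filter (· ≤ k / m), f d = ∑ e ∈ k.divisors.filter (m ≤ ·), f (k / e) := by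
  refine Finset.sum_nbij' (k / ·) (k / ·) ?_ ?_ ?_ ?_ ?_
  all_goals simp only [Finset.mem_filter, Nat.mem_divisors, and_imp]
  · intro d hd hk hdm
    refine ⟨⟨Nat.div_dvd_of_dvd hd, hk⟩, ?_⟩
    rwa [Nat.le_div_iff_mul_le (Nat.pos_of_dvd_of_pos hd (Nat.pos_of_ne_zero hk)), mul_comm,
      ← Nat.le_div_iff_mul_le hm]
  · intro e he hk hme
    refine ⟨⟨Nat.div_dvd_of_dvd he, hk⟩, ?_⟩
    exact Nat.div_le_div_left hme hm
  · intro d hd hk _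
    exact Nat.div_div_self hd hk
  · intro e he hk _
    exact Nat.div_div_self he hk
  · intro d hd hk _
    rw [Nat.div_div_self hd hk]

theorem Nat.sum_divisors_div_sub_self {K : Type*} [Field K] [CharZero K] (k : ℕ) :
    ∑ e ∈ k.divisors, ((k : K) / e - e) = 0 := by
  rw [Finset.sum_sub_distrib, sub_eq_zero]
  refine Eq.trans (Finset.sum_congr rfl fun e he => ?_) (Nat.sum_div_divisors k (fun e => (e : K)))
  rw [Nat.cast_div (Nat.dvd_of_mem_divisors he)]
  exact_mod_cast (Nat.pos_of_mem_divisors he).ne'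

theorem sigma'_combination_eq_sum_divisors (k : ℕ) :
    (3 * (k : ℝ) - 2) * sigma' 0 k - ((k : ℝ) - 1) * sigma' 1 k - sigma' 2 k =
      ∑ e ∈ k.divisors, (3 * (k : ℝ) - 2 - ((k : ℝ) - 1) * e - (e : ℝ) ^ 2) := by
  simp only [sigma', Real.rpow_zero, Real.rpow_one, Real.rpow_two, Finset.mul_sum,
    ← Finset.sum_sub_distrib, mul_one]

theorem sigmaB_three_combination_eq_sum_divisors (k : ℕ) :
    (k : ℝ) ^ 2 * sigmaB (-2) 3 k + (k : ℝ) * ((k : ℝ) - 3) * sigmaB (-1) 3 k -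
      (3 * (k : ℝ) - 2) * sigmaB 0 3 k + 2 * sigmaB 1 3 k =
      ∑ e ∈ k.divisors, ((e : ℝ) - 1) * ((e : ℝ) - 2) * ((e : ℝ) + k) / e := by
  simp only [sigmaB, Finset.mul_sum, ← Finset.sum_add_distrib, ← Finset.sum_sub_distrib]
  rw [Nat.sum_divisors_filter_le_div three_pos]
  refine (Finset.sum_congr rfl fun e he => ?_).trans (Finset.sum_filter_of_ne fun e he hne => ?_)
  · have he' := (Finset.mem_filter.1 he).1
    have he0 : (e : ℝ) ≠ 0 := by exact_mod_cast (Nat.pos_of_mem_divisors he').ne'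
    have hk0 : (k : ℝ) ≠ 0 := by exact_mod_cast (Nat.mem_divisors.1 he').2
    rw [Nat.cast_div (Nat.dvd_of_mem_divisors he') he0, Real.rpow_neg_one, Real.rpow_zero,
      Real.rpow_one, Real.rpow_neg (by positivity), Real.rpow_two]
    field_simp
    ring
  · by_contra! h
    interval_cases e <;> simp_all

theorem tau20_eq_zero (x k : ℕ) : tau20 x k = 0 := by
  have hsum : ∑ e ∈ k.divisors, ((3 * (k : ℝ) - 2 - ((k : ℝ) - 1) * e - (e : ℝ) ^ 2) +
      ((e : ℝ) - 1) * ((e : ℝ) - 2) * ((e : ℝ) + k) / e) = 0 := by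
    calc _ = 2 * ∑ e ∈ k.divisors, ((k : ℝ) / e - e) := by
          rw [Finset.mul_sum]
          refine Finset.sum_congr rfl fun e he => ?_
          have he0 : (e : ℝ) ≠ 0 := by exact_mod_cast (Nat.pos_of_mem_divisors he).ne'
          field_simp
          ring
      _ = 0 := by rw [Nat.sum_divisors_div_sub_self, mul_zero]
  rw [tau20, sigma'_combination_eq_sum_divisors, sigmaB_three_combination_eq_sum_divisors,
    ← mul_add, ← Finset.sum_add_distrib, hsum, mul_zero]

theorem divisor_function_exact_formula_general (x : ℕ) :
    (x.choose 2 : ℝ) * sigma' 0 x = ∑ k ∈ Finset.Icc 1 (x - 1), tau20 x k + rho20 x := by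
  have hrho : rho20 x = tau20 x x + (x.choose 2 : ℝ) * sigma' 0 x := by
    rw [Nat.cast_choose_two, tau20, rho20]
    ring
  simp only [hrho, tau20_eq_zero, Finset.sum_const_zero, zero_add]

/-- for every `x ≥ 1`,
`C(x,2) d(x) = ∑_{k=1}^{x-1} τ_{2,x}^{(0)}(k) + ρ_2^{(0)}(x)`, where `d(x) = σ_0(x)`. -/
theorem divisor_function_exact_formula (x : ℕ) (hx : 1 ≤ x) :
    (x.choose 2 : ℝ) * sigma' 0 x = ∑ k ∈ Finset.Icc 1 (x - 1), tau20 x k + rho20 x :=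
  divisor_function_exact_formula_general x
end
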